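/- Let G be a finite DAG, S ⊆ V a prefix subset, and let w, w' ∈ S̄ each have exactly one ancestor-or-self in src(S̄), say Anc[w] ∩ src(S̄) = {s} and Anc[w'] ∩ src(S̄) = {s'}. Then w and w' are d-connected given S if and only if s = s'. -/

import Mathlib

open Relation

/-- Undirected adjacency induced by a directed edge relation. -/
def Adjacent {V : Type*} (E : V → V → Prop) (a b : V) : Prop := E a b ∨ E b a

/-- `x` is a collider on the path (vertex list) `p`: both neighboring edges point into `x`. -/
def IsCollider {V : Type*} (E : V → V → Prop) (p : List V) (x : V) : Prop :=
  ∃ l1 a b l2, p = l1 ++ a :: x :: b :: l2 ∧ E a x ∧ E b x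

/-- A path (vertex list) is active given a conditioning set `C`:
every collider is in `C` or has a descendant in `C`, and no non-collider is in `C`. -/
def ActivePath {V : Type*} (E : V → V → Prop) (C : Set V) (p : List V) : Prop :=
  (∀ x ∈ p, IsCollider E p x → ∃ d, ReflTransGen E x d ∧ d ∈ C) ∧
  (∀ x ∈ p, ¬ IsCollider E p x → x ∉ C)

/-- `p` is a path between `u` and `v`: consecutively adjacent, distinct vertices. -/
def IsPathBetween {V : Type*} (E : V → V → Prop) (u v : V) (p : List V) : Prop :=
  p.Chain' (Adjacent E) ∧ p.Nodup ∧ p.head? = some u ∧ p.getLast? = some v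

/-- `u` and `v` are d-connected given `C`. -/
def DConn {V : Type*} (E : V → V → Prop) (C : Set V) (u v : V) : Prop :=
  ∃ p, IsPathBetween E u v p ∧ ActivePath E C p

/-- `u` and `v` are d-separated given `C`. -/
def DSep {V : Type*} (E : V → V → Prop) (C : Set V) (u v : V) : Prop :=
  ¬ DConn E C u v

/-- `S` is a prefix (ancestrally closed) subset. -/
def IsPrefixSet {V : Type*} (E : V → V → Prop) (S : Set V) : Prop :=
  ∀ u v, E u v → v ∈ S → u ∈ S

/-- Source vertices of the induced subgraph on `T`: vertices of `T` with no parent in `T`. -/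
def srcOf {V : Type*} (E : V → V → Prop) (T : Set V) : Set V :=
  {v | v ∈ T ∧ ∀ u, E u v → u ∉ T}

/-- The edge relation is acyclic. -/
def Acyclic {V : Type*} (E : V → V → Prop) : Prop :=
  ∀ v, ¬ TransGen E v v

/-- `p` is a directed path from `u` to `v` (all edges forward). -/
def DirPath {V : Type*} (E : V → V → Prop) (u v : V) (p : List V) : Prop :=
  p.Chain' E ∧ p.head? = some u ∧ p.getLast? = some v

/-
An active path given a prefix set `S` has no collider: a collider lies in `S` together with its
parent on the path, and that parent is a non-collider, so it must avoid `S`. A collider-free path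
descends on both sides from one of its vertices, and conversely two directed paths out of a common
ancestor splice into a collider-free path. Hence `w` and `w'` are d-connected given `S` iff they
have a common ancestor outside `S`; the source ancestors in `src(S̄)` of such an ancestor are then
shared by `w` and `w'`, and conversely `s = s'` is itself a common ancestor outside `S`.
-/

section

open List

theorem List.Nodup.append_cons_inj_right {α : Type*} {l₁ l₂ r₁ r₂ : List α} {x : α}
    (hnd : (l₁ ++ x :: r₁).Nodup) (h : l₁ ++ x :: r₁ = l₂ ++ x :: r₂) : r₁ = r₂ := by
  classical
  have h₁ : x ∉ l₁ := fun hx => disjoint_of_nodup_append hnd hx mem_cons_self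
  have h₂ : x ∉ l₂ := fun hx => disjoint_of_nodup_append (h ▸ hnd) hx mem_cons_self
  have hlen : l₁.length = l₂.length := by
    simpa [idxOf_append_of_notMem h₁, idxOf_append_of_notMem h₂] using congrArg (idxOf x) h
  simpa using (append_inj h hlen).2

variable {V : Type*} {E : V → V → Prop}

theorem IsPrefixSet.mem_of_reflTransGen {S : Set V} (hS : IsPrefixSet E S) {a b : V}
    (h : ReflTransGen E a b) (hb : b ∈ S) : a ∈ S := by
  induction h using ReflTransGen.head_induction_on with
  | refl => exact hb
  | head hac _ ih => exact hS _ _ hac ih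

theorem List.IsChain.reflTransGen_of_mem {a x : V} {l : List V} (hl : (a :: l).IsChain E)
    (hx : x ∈ a :: l) : ReflTransGen E a x :=
  hl.induction (ReflTransGen E a) _ (fun _ _ hyz hay => hay.tail hyz) (fun _ => .refl) x hx

namespace Acyclic

theorem asymm (h : Acyclic E) {a b : V} (hab : E a b) : ¬ E b a :=
  fun hba => h a (.tail (.single hab) hba)

theorem nodup_of_isChain (h : Acyclic E) {l : List V} (hl : l.IsChain E) : l.Nodup := by
  refine (hl.imp fun _ _ => TransGen.single).pairwise.imp ?_
  rintro a _ hab rfl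
  exact h a hab

theorem exists_reflTransGen_mem_srcOf [Finite V] (h : Acyclic E) {T : Set V} {t : V}
    (ht : t ∈ T) : ∃ r, ReflTransGen E r t ∧ r ∈ srcOf E T := by
  have : IsStrictOrder V (TransGen E) := { irrefl := h, trans := fun _ _ _ => TransGen.trans }
  obtain ⟨r, ⟨hrT, hrt⟩, hmin⟩ := (Finite.wellFounded_of_trans_of_irrefl (TransGen E)).has_min
    {x | x ∈ T ∧ ReflTransGen E x t} ⟨t, ht, .refl⟩
  exact ⟨r, hrt, hrT, fun u hur hu => hmin u ⟨hu, hrt.head hur⟩ (.single hur)⟩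

end Acyclic

def ColliderFree (E : V → V → Prop) (p : List V) : Prop :=
  ∀ x, ¬ IsCollider E p x

theorem isCollider_cons_iff {c x : V} {p : List V} :
    IsCollider E (c :: p) x ↔ IsCollider E p x ∨ ∃ b l, p = x :: b :: l ∧ E c x ∧ E b x := by
  constructor
  · rintro ⟨_ | ⟨d, l₁⟩, a, b, l₂, hp, hax, hbx⟩
    · obtain ⟨rfl, rfl⟩ := List.cons.inj hp
      exact Or.inr ⟨b, l₂, rfl, hax, hbx⟩
    · exact Or.inl ⟨l₁, a, b, l₂, (List.cons.inj hp).2, hax, hbx⟩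
  · rintro (⟨l₁, a, b, l₂, rfl, hax, hbx⟩ | ⟨b, l, rfl, hcx, hbx⟩)
    · exact ⟨c :: l₁, a, b, l₂, rfl, hax, hbx⟩
    · exact ⟨[], c, b, l, rfl, hcx, hbx⟩

namespace ColliderFree

theorem of_cons {c : V} {p : List V} (h : ColliderFree E (c :: p)) : ColliderFree E p :=
  fun x hx => h x (isCollider_cons_iff.2 (Or.inl hx))

theorem of_append_right {l₁ l₂ : List V} (h : ColliderFree E (l₁ ++ l₂)) : ColliderFree E l₂ := by
  induction l₁ with
  | nil => exact h
  | cons c l ih => exact ih h.of_cons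

theorem cons (hacyc : Acyclic E) {p : List V} {c v : V} (hp : ColliderFree E p)
    (hv : p.head? = some v) (hvc : E v c) : ColliderFree E (c :: p) := by
  intro x hx
  rcases isCollider_cons_iff.1 hx with hx | ⟨b, l, rfl, hcx, -⟩
  · exact hp x hx
  · obtain rfl : x = v := Option.some.inj hv
    exact hacyc.asymm hvc hcx

theorem isChain_of_head_edge : ∀ {a b : V} {l : List V}, ColliderFree E (a :: b :: l) →
    (a :: b :: l).IsChain (Adjacent E) → E a b → (a :: b :: l).IsChain E
  | _, b, [], _, _, hab => .cons_cons hab (.singleton b)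
  | a, b, c :: l, hcf, hadj, hab => by
    have hbc : E b c := (isChain_cons_cons.1 (isChain_cons_cons.1 hadj).2).1.resolve_right
      fun hcb => hcf b (isCollider_cons_iff.2 (Or.inr ⟨c, l, rfl, hab, hcb⟩))
    exact .cons_cons hab (isChain_of_head_edge hcf.of_cons (isChain_cons_cons.1 hadj).2 hbc)

theorem exists_common_ancestor {u v : V} {l : List V} (hcf : ColliderFree E (u :: l))
    (hadj : (u :: l).IsChain (Adjacent E)) (hv : (u :: l).getLast? = some v) :
    ∃ t ∈ u :: l, ReflTransGen E t u ∧ ReflTransGen E t v := by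
  induction l generalizing u with
  | nil =>
    obtain rfl : u = v := Option.some.inj hv
    exact ⟨u, mem_cons_self, .refl, .refl⟩
  | cons b l ih =>
    rcases (isChain_cons_cons.1 hadj).1 with hub | hbu
    · exact ⟨u, mem_cons_self, .refl, (hcf.isChain_of_head_edge hadj hub).reflTransGen_of_mem
        (mem_of_getLast? hv)⟩
    · obtain ⟨t, ht, htb, htv⟩ := ih hcf.of_cons (isChain_cons_cons.1 hadj).2
        (by rwa [getLast?_cons_cons] at hv)
      exact ⟨t, mem_cons_of_mem u ht, htb.tail hbu, htv⟩

end ColliderFree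

theorem Acyclic.colliderFree_of_isChain (h : Acyclic E) {p : List V} (hp : p.IsChain E) :
    ColliderFree E p := by
  rintro x ⟨l₁, a, b, l₂, rfl, -, hbx⟩
  have hxb := (isChain_cons_cons.1 (isChain_append.1 hp).2.1.tail).1
  exact h.asymm hxb hbx

theorem ActivePath.colliderFree {S : Set V} {p : List V} (hact : ActivePath E S p)
    (hacyc : Acyclic E) (hS : IsPrefixSet E S) (hnd : p.Nodup) : ColliderFree E p := by
  rintro x ⟨l₁, a, b, l₂, hp, hax, hbx⟩
  obtain ⟨d, hxd, hdS⟩ := hact.1 x (by simp [hp]) ⟨l₁, a, b, l₂, hp, hax, hbx⟩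
  -- The parent `a` of the collider `x` lies in `S`, so `a` is a collider too; as `p` has no
  -- repetitions, its right neighbour is `x`, giving the 2-cycle `a → x → a`.
  have haS : a ∈ S := hS a x hax (hS.mem_of_reflTransGen hxd hdS)
  have ha : IsCollider E p a := by_contra fun h => hact.2 a (by simp [hp]) h haS
  obtain ⟨m₁, a', b', m₂, hp', -, hb'a⟩ := ha
  have hsplit : x :: b :: l₂ = b' :: m₂ :=
    (hp ▸ hnd).append_cons_inj_right (l₂ := m₁ ++ [a']) (by rw [← hp, hp']; simp)
  obtain rfl : x = b' := (List.cons.inj hsplit).1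
  exact hacyc.asymm hax hb'a

theorem Acyclic.exists_colliderFree_path (hacyc : Acyclic E) {s u v : V}
    (hsu : ReflTransGen E s u) (hsv : ReflTransGen E s v) :
    ∃ p, IsPathBetween E u v p ∧ ColliderFree E p ∧ ∀ x ∈ p, ReflTransGen E s x := by
  induction hsu with
  | refl =>
    obtain ⟨l, hl, hlast⟩ := exists_isChain_cons_of_relationReflTransGen hsv
    refine ⟨s :: l, ⟨hl.imp fun _ _ => Or.inl, hacyc.nodup_of_isChain hl, rfl, ?_⟩,
      hacyc.colliderFree_of_isChain hl, fun x hx => hl.reflTransGen_of_mem hx⟩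
    rw [getLast?_eq_some_getLast (cons_ne_nil _ _), hlast]
  | @tail a w _ haw ih =>
    obtain ⟨p, ⟨hadj, hnd, hhead, hlast⟩, hcf, hdesc⟩ := ih
    by_cases hw : w ∈ p
    · obtain ⟨l₁, l₂, rfl⟩ := append_of_mem hw
      refine ⟨w :: l₂, ⟨(isChain_append.1 hadj).2.1, hnd.of_append_right, rfl, ?_⟩,
        hcf.of_append_right, fun x hx => hdesc x (mem_append_right _ hx)⟩
      rwa [getLast?_append_cons] at hlast
    · obtain ⟨l, rfl⟩ := head?_eq_some_iff.1 hhead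
      refine ⟨w :: a :: l, ⟨.cons_cons (Or.inr haw) hadj, nodup_cons.2 ⟨hw, hnd⟩, rfl, ?_⟩,
        hcf.cons hacyc hhead haw, ?_⟩
      · rwa [getLast?_cons_cons]
      · rintro x (_ | ⟨_, hx⟩)
        · exact .tail (hdesc a mem_cons_self) haw
        · exact hdesc x hx

theorem dConn_iff_exists_common_ancestor_not_mem (hacyc : Acyclic E) {S : Set V}
    (hS : IsPrefixSet E S) {u v : V} :
    DConn E S u v ↔ ∃ t ∉ S, ReflTransGen E t u ∧ ReflTransGen E t v := by
  constructor
  · rintro ⟨p, ⟨hadj, hnd, hhead, hlast⟩, hact⟩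
    have hcf := hact.colliderFree hacyc hS hnd
    obtain ⟨l, rfl⟩ := head?_eq_some_iff.1 hhead
    obtain ⟨t, htp, htu, htv⟩ := hcf.exists_common_ancestor hadj hlast
    exact ⟨t, hact.2 t htp (hcf t), htu, htv⟩
  · rintro ⟨t, htS, htu, htv⟩
    obtain ⟨p, hpath, hcf, hdesc⟩ := hacyc.exists_colliderFree_path htu htv
    exact ⟨p, hpath, fun x _ hx => absurd hx (hcf x),
      fun x hx _ hxS => htS (hS.mem_of_reflTransGen (hdesc x hx) hxS)⟩

end

theorem dconn_iff_same_source_ancestor_general {V : Type*} [Fintype V] (E : V → V → Prop)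
    (hacyc : Acyclic E) (S : Set V) (hS : IsPrefixSet E S)
    (w w' s s' : V)
    (hs : {x | ReflTransGen E x w ∧ x ∈ srcOf E Sᶜ} = {s})
    (hs' : {x | ReflTransGen E x w' ∧ x ∈ srcOf E Sᶜ} = {s'}) :
    DConn E S w w' ↔ s = s' := by
  rw [dConn_iff_exists_common_ancestor_not_mem hacyc hS]
  constructor
  · rintro ⟨t, htS, htw, htw'⟩
    obtain ⟨r, hrt, hr⟩ := hacyc.exists_reflTransGen_mem_srcOf (T := Sᶜ) htS
    have hrs : r = s := hs.subset ⟨hrt.trans htw, hr⟩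
    have hrs' : r = s' := hs'.subset ⟨hrt.trans htw', hr⟩
    exact hrs.symm.trans hrs'
  · rintro rfl
    obtain ⟨hsw, hsS, -⟩ := hs.superset (Set.mem_singleton s)
    obtain ⟨hsw', -⟩ := hs'.superset (Set.mem_singleton s)
    exact ⟨s, hsS, hsw, hsw'⟩

/-- if `w, w' ∈ S̄` have unique source-ancestors `s`, `s'` respectively,
then `w` and `w'` are d-connected given `S` iff `s = s'`. -/
theorem dconn_iff_same_source_ancestor {V : Type*} [Fintype V] (E : V → V → Prop)
    (hacyc : Acyclic E) (S : Set V) (hS : IsPrefixSet E S)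
    (w w' s s' : V) (hw : w ∉ S) (hw' : w' ∉ S)
    (hs : {x | ReflTransGen E x w ∧ x ∈ srcOf E Sᶜ} = {s})
    (hs' : {x | ReflTransGen E x w' ∧ x ∈ srcOf E Sᶜ} = {s'}) :
    DConn E S w w' ↔ s = s' :=
  dconn_iff_same_source_ancestor_general E hacyc S hS w w' s s' hs hs'
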